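/- Let n ≥ 1 and let μ_1, …, μ_n be real numbers with −1 < μ_k < 1 for every k. Fix a > −1/2, set μ_{k,a} = μ_k + a(1+μ_k), and define A_a(x) = −∫_{−1/(1+2a)}^{x} s·∏_{k=1}^{n}(1 + μ_{k,a}·s) ds. If A_a(1) = 0, then for every x in the open interval (−1/(1+2a), 1) one has 0 < A_a(x) ≤ A_a(0). -/
import Mathlib


open Real MeasureTheory Filter Set

/-- `A_a(x) = -∫_{-1/(1+2a)}^{x} s ∏ₖ (1 + μ_{k,a} s) ds`. -/
noncomputable def sasakiA {n : ℕ} (μ : Fin n → ℝ) (a x : ℝ) : ℝ :=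
  -∫ s in (-1/(1+2*a))..x, s * ∏ k, (1 + (μ k + a * (1 + μ k)) * s)

theorem A_pos_and_le_A_zero (n : ℕ) (hn : 1 ≤ n) (μ : Fin n → ℝ)
    (hμ : ∀ k, -1 < μ k ∧ μ k < 1) (a : ℝ) (ha : -1/2 < a)
    (hA1 : sasakiA μ a 1 = 0) :
    ∀ x ∈ Set.Ioo (-1/(1+2*a)) (1 : ℝ),
      0 < sasakiA μ a x ∧ sasakiA μ a x ≤ sasakiA μ a 0 := by
  have h2a : (0:ℝ) < 1 + 2*a := by linarith
  set b : ℝ := -1/(1+2*a) with hbdef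
  have hb0 : b < 0 := by
    rw [hbdef]; exact div_neg_of_neg_of_pos (by norm_num) h2a
  set f : ℝ → ℝ := fun s => s * ∏ k, (1 + (μ k + a * (1 + μ k)) * s) with hfdef
  have hcont : Continuous f := by
    apply Continuous.mul continuous_id
    exact continuous_finset_prod _ (fun k _ => by continuity)
  have hint : ∀ u v : ℝ, IntervalIntegrable f volume u v :=
    fun u v => hcont.intervalIntegrable u v
  have hP : ∀ s, b ≤ s → s ≤ 1 → 0 < ∏ k, (1 + (μ k + a * (1 + μ k)) * s) := by
    intro s hbs hs1
    apply Finset.prod_pos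
    intro k _
    set m := μ k + a * (1 + μ k) with hm
    have hm1 : -1 < m := by nlinarith [(hμ k).1, (hμ k).2]
    have hm2 : m < 1 + 2*a := by nlinarith [(hμ k).1, (hμ k).2]
    rcases le_or_gt 0 m with h | h
    · have hmb : 0 < 1 + m * b := by
        have hq : 1 + m * b = (1 + 2*a - m)/(1 + 2*a) := by
          rw [hbdef]; field_simp; ring
        rw [hq]; exact div_pos (by linarith) h2a
      have : m * b ≤ m * s := mul_le_mul_of_nonneg_left hbs h
      linarith
    · have : m * 1 ≤ m * s := mul_le_mul_of_nonpos_left hs1 h.le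
      linarith
  -- f is negative on (b,0) and positive on (0,1)
  have hfneg : ∀ s, b < s → s < 0 → f s < 0 := by
    intro s h1 h2
    exact mul_neg_of_neg_of_pos h2 (hP s h1.le (by linarith))
  have hfpos : ∀ s, 0 < s → s < 1 → f s > 0 := by
    intro s h1 h2
    exact mul_pos h1 (hP s (by linarith) h2.le)
  intro x hx
  obtain ⟨hbx, hx1⟩ := hx
  have hA : ∀ y : ℝ, sasakiA μ a y = -∫ s in b..y, f s := by
    intro y; rfl
  have hA1' : (∫ s in b..(1:ℝ), f s) = 0 := by
    have := hA1; rw [hA 1] at this; linarith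
  constructor
  · -- 0 < A(x)
    rw [hA x]
    rcases le_or_gt x 0 with hx0 | hx0
    · -- integral over (b,x) of f is negative
      have hpos : 0 < ∫ s in b..x, (fun s => -f s) s := by
        apply intervalIntegral.intervalIntegral_pos_of_pos_on
        · exact (hint b x).neg
        · intro s hs
          show 0 < -f s
          have := hfneg s hs.1 (lt_of_lt_of_le hs.2 hx0)
          linarith
        · exact hbx
      rw [intervalIntegral.integral_neg] at hpos
      linarith
    · -- ∫ b..x f = -∫ x..1 f and ∫ x..1 f > 0
      have hadj : (∫ s in b..x, f s) + ∫ s in x..1, f s = ∫ s in b..(1:ℝ), f s :=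
        intervalIntegral.integral_add_adjacent_intervals (hint b x) (hint x 1)
      have hpos : 0 < ∫ s in x..1, f s := by
        apply intervalIntegral.intervalIntegral_pos_of_pos_on (hint x 1)
        · intro s hs
          exact hfpos s (lt_trans hx0 hs.1) hs.2
        · exact hx1
      rw [hA1'] at hadj
      linarith
  · -- A(x) ≤ A(0)
    rw [hA x, hA 0]
    have hadj : (∫ s in b..(0:ℝ), f s) + ∫ s in (0:ℝ)..x, f s = ∫ s in b..x, f s :=
      intervalIntegral.integral_add_adjacent_intervals (hint b 0) (hint 0 x)
    have h0x : 0 ≤ ∫ s in (0:ℝ)..x, f s := by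
      rcases le_or_gt 0 x with hx0 | hx0
      · apply intervalIntegral.integral_nonneg hx0
        intro u hu
        rcases eq_or_lt_of_le hu.1 with h | h
        · simp [hfdef, ← h]
        · exact (hfpos u h (lt_of_le_of_lt hu.2 hx1)).le
      · rw [intervalIntegral.integral_symm]
        have : 0 ≤ ∫ s in x..(0:ℝ), (fun s => -f s) s := by
          apply intervalIntegral.integral_nonneg hx0.le
          intro u hu
          show 0 ≤ -f u
          rcases eq_or_lt_of_le hu.2 with h | h
          · simp [hfdef, h]
          · exact (neg_nonneg.mpr (hfneg u (lt_of_lt_of_le hbx hu.1) h).le)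
        rw [intervalIntegral.integral_neg] at this
        linarith
    linarith
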